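/- Let X, Y ⊂ ℝ be two disjoint sets of type F_σ such that every x ∈ X is a bilateral accumulation point of ℝ \ Y and every y ∈ Y is a bilateral accumulation point of ℝ \ X. Then for every a ∈ X and c ∈ Y the open segment between a and c meets the complement of X ∪ Y; that is, ]a,c[ \ (X ∪ Y) ≠ ∅. -/

import Mathlib

/-!
Suppose `[a, c] ⊆ X ∪ Y` and let `B` be the closed set of points of `[a, c]` adherent to both
`X ∩ [a, c]` and `Y ∩ [a, c]`. Between a point of `Y` and a point of `X` there is always a point of
`Y` adherent to `X`: otherwise the infimum of the `X`-points lies in `X` with only `Y`-points on one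
side, contradicting bilateral accumulation. Hence `B` is nonempty and `B ∩ X`, `B ∩ Y` are both
dense in `B`. Since `X` and `Y` are `F_σ`, these are complementary dense `G_δ` subsets of `B`,
which is impossible by Baire's theorem.
-/

open MeasureTheory Metric Filter Set ENNReal
open scoped Topology NNReal ENNReal symmDiff

noncomputable section
attribute [local instance] Classical.propDecidable

abbrev Euc (n : ℕ) := EuclideanSpace ℝ (Fin n)

variable {n : ℕ}

/-- Upper outer density of `A` at `x`. -/
def upperDens (A : Set (Euc n)) (x : Euc n) : ℝ≥0∞ :=
  limsup (fun r : ℝ => volume (A ∩ closedBall x r) / volume (closedBall x r)) (𝓝[>] 0)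

def essInterior (A : Set (Euc n)) : Set (Euc n) := {x | upperDens Aᶜ x = 0}

def essBoundary (A : Set (Euc n)) : Set (Euc n) :=
  {x | 0 < upperDens A x ∧ 0 < upperDens Aᶜ x}

def prepInterior (A : Set (Euc n)) : Set (Euc n) := {x | upperDens Aᶜ x < 1/2}

def prepBoundary (A : Set (Euc n)) : Set (Euc n) :=
  {x | 1/2 ≤ upperDens A x ∧ 1/2 ≤ upperDens Aᶜ x}

def IsTestFun (Ω : Set (Euc n)) (φ : Euc n → ℝ) : Prop :=
  ContDiff ℝ (⊤ : ℕ∞) φ ∧ HasCompactSupport φ ∧ tsupport φ ⊆ Ω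

def IsTestField (Ω : Set (Euc n)) (ψ : Euc n → Euc n) : Prop :=
  ContDiff ℝ (⊤ : ℕ∞) ψ ∧ HasCompactSupport ψ ∧ tsupport ψ ⊆ Ω

/-- divergence of a vector field -/
def divg (ψ : Euc n → Euc n) (x : Euc n) : ℝ :=
  ∑ i, fderiv ℝ ψ x (EuclideanSpace.single i 1) i

/-- Variation of `A` in `Ω` at direction `τ`. -/
def dirVar (Ω A : Set (Euc n)) (τ : Euc n) : ℝ≥0∞ :=
  if NullMeasurableSet (A ∩ Ω) volume then
    ⨆ (φ : Euc n → ℝ) (_ : IsTestFun Ω φ ∧ ∀ x, |φ x| ≤ 1),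
      ENNReal.ofReal (∫ x in Ω, A.indicator (fun _ => (1:ℝ)) x * fderiv ℝ φ x τ)
  else ⊤

/-- Perimeter of `A` in `Ω`. -/
def perim (Ω A : Set (Euc n)) : ℝ≥0∞ :=
  if NullMeasurableSet (A ∩ Ω) volume then
    ⨆ (ψ : Euc n → Euc n) (_ : IsTestField Ω ψ ∧ ∀ x, ‖ψ x‖ ≤ 1),
      ENNReal.ofReal (∫ x in Ω, A.indicator (fun _ => (1:ℝ)) x * divg ψ x)
  else ⊤

/-- Carathéodory's construction (method II) from a set function `m`
defined on a covering family `F`. -/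
def carathII {X : Type*} [EMetricSpace X] (m : Set X → ℝ≥0∞) (F : Set (Set X)) (E : Set X) :
    ℝ≥0∞ :=
  ⨆ (δ : ℝ≥0∞) (_ : 0 < δ),
    ⨅ (t : ℕ → Set X) (_ : E ⊆ ⋃ i, t i) (_ : ∀ i, t i ∈ F ∧ EMetric.diam (t i) ≤ δ),
      ∑' i, m (t i)

/-- orthogonal projection onto the hyperplane orthogonal to `τ` -/
def projFn (τ : Euc n) (x : Euc n) : Euc n := (Submodule.orthogonalProjectionOnto (ℝ ∙ τ)ᗮ x : Euc n)

/-- The projection measure `μ_τ`. -/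
def muProj (τ : Euc n) (E : Set (Euc n)) : ℝ≥0∞ :=
  carathII (fun B => μH[(n : ℝ) - 1] (projFn τ '' B)) {B | MeasurableSet B} E

/-- volume of the unit ball in `ℝ^k` -/
def unitBallVol (k : ℕ) : ℝ := Real.pi ^ ((k : ℝ) / 2) / Real.Gamma ((k : ℝ) / 2 + 1)

/-- The integralgeometric measure `I^{n-1}_1`. -/
def intGeom (n : ℕ) (E : Set (Euc n)) : ℝ≥0∞ :=
  carathII (fun B => (ENNReal.ofReal (2 * unitBallVol (n - 1)))⁻¹ *
      ∫⁻ τ in sphere (0 : Euc n) 1, μH[(n : ℝ) - 1] (projFn τ '' B) ∂μH[(n : ℝ) - 1])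
    {B | MeasurableSet B} E

/-- The line through `z` in direction `τ`. -/
def lineThrough (z τ : Euc n) : Set (Euc n) := {y | ∃ t : ℝ, y = z + t • τ}

/-- The set `M^A_{Ω,τ}(z)` of hits of `L_τ(z) ∩ Ω` on `A`. -/
def hits (Ω A : Set (Euc n)) (τ z : Euc n) : Set (Euc n) :=
  {x ∈ lineThrough z τ ∩ Ω | ∀ r > (0:ℝ),
    0 < μH[(1:ℝ)] ((lineThrough z τ ∩ Ω) ∩ A ∩ ball x r) ∧
    0 < μH[(1:ℝ)] (((lineThrough z τ ∩ Ω) \ A) ∩ ball x r)}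

/-- `m^A_{Ω,τ}(z)`, the number of hits. -/
def mHits (Ω A : Set (Euc n)) (τ z : Euc n) : ℝ≥0∞ := (hits Ω A τ z).encard

/-- Integral of a function against a (finite) signed Borel measure. -/
def sintegral (s : SignedMeasure (Euc n)) (φ : Euc n → ℝ) : ℝ :=
  ∫ x, φ x ∂s.toJordanDecomposition.posPart - ∫ x, φ x ∂s.toJordanDecomposition.negPart

/-- A signed measure is concentrated on `Ω` (i.e. it is a measure "on `Ω`"). -/
def VanishesOff (Ω : Set (Euc n)) (s : SignedMeasure (Euc n)) : Prop :=
  ∀ E, MeasurableSet E → E ⊆ Ωᶜ → s E = 0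

/-- `s` is the measure `Φ^g_{Ω,τ}`. -/
def IsDirVarMeasure (Ω : Set (Euc n)) (τ : Euc n) (g : Euc n → ℝ) (s : SignedMeasure (Euc n)) :
    Prop :=
  VanishesOff Ω s ∧
  ∀ φ : Euc n → ℝ, IsTestFun Ω φ →
    ∫ x in Ω, g x * fderiv ℝ φ x τ = - sintegral s φ

/-- `g ∈ BV(Ω,τ)`. -/
def MemBVDir (Ω : Set (Euc n)) (τ : Euc n) (g : Euc n → ℝ) : Prop :=
  LocallyIntegrableOn g Ω volume ∧ ∃ s, IsDirVarMeasure Ω τ g s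

/-- `g ∈ BV(Ω)`. -/
def MemBV (Ω : Set (Euc n)) (g : Euc n → ℝ) : Prop :=
  LocallyIntegrableOn g Ω volume ∧
  ∃ s : Fin n → SignedMeasure (Euc n), (∀ i, VanishesOff Ω (s i)) ∧
    ∀ ψ : Euc n → Euc n, IsTestField Ω ψ →
      ∫ x in Ω, g x * divg ψ x = - ∑ i, sintegral (s i) (fun x => ψ x i)

/-- Total variation `‖Φ‖` of an `ℝⁿ`-valued Borel measure given by components `Φ i`. -/
def vecTotalVariation (Φ : Fin n → SignedMeasure (Euc n)) : ℝ≥0∞ :=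
  ⨆ (P : ℕ → Set (Euc n)) (_ : ∀ i, MeasurableSet (P i))
    (_ : Pairwise (Function.onFun Disjoint P)),
    ∑' i, ENNReal.ofReal (Real.sqrt (∑ j, (Φ j (P i))^2))

/-- `t` is a bilateral accumulation point of `S ⊆ ℝ`. -/
def IsBilateralAccPt (S : Set ℝ) (t : ℝ) : Prop :=
  t ∈ closure (S ∩ Set.Ioi t) ∧ t ∈ closure (S ∩ Set.Iio t)

section Order

variable {α : Type*} [ConditionallyCompleteLinearOrder α] [TopologicalSpace α] [OrderTopology α]
  {S T : Set α}

lemma exists_mem_inter_closure_inter_Icc_of_forall_mem_closure_Iio {y t : α} (hyt : y ≤ t)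
    (hcover : Icc y t ⊆ S ∪ T) (hacc : ∀ s ∈ S, s ∈ closure (Tᶜ ∩ Iio s))
    (hy : y ∈ T) (ht : t ∈ S) :
    ∃ u ∈ Icc y t ∩ T, u ∈ closure (S ∩ Icc y t) := by
  have hne : (S ∩ Icc y t).Nonempty := ⟨t, ht, hyt, le_rfl⟩
  have hbdd : BddBelow (S ∩ Icc y t) := ⟨y, fun _ hp => hp.2.1⟩
  set u := sInf (S ∩ Icc y t)
  have hu : u ∈ Icc y t := ⟨le_csInf hne fun _ hp => hp.2.1, csInf_le hbdd ⟨ht, hyt, le_rfl⟩⟩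
  refine ⟨u, ⟨hu, ?_⟩, csInf_mem_closure hne hbdd⟩
  by_contra huT
  have huS : u ∈ S := (hcover hu).resolve_right huT
  have hyu : y < u := hu.1.lt_of_ne fun h => huT (h ▸ hy)
  have hT : Ioo y u ⊆ T := fun p hp =>
    (hcover ⟨hp.1.le, hp.2.le.trans hu.2⟩).resolve_left fun hpS =>
      (csInf_le hbdd ⟨hpS, hp.1.le, hp.2.le.trans hu.2⟩).not_gt hp.2
  obtain ⟨z, hzy, hzT, hzu⟩ := mem_closure_iff.1 (hacc u huS) (Ioi y) isOpen_Ioi hyu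
  exact hzT (hT ⟨hzy, hzu⟩)

lemma exists_mem_inter_closure_inter_uIcc {y t : α} (hcover : uIcc y t ⊆ S ∪ T)
    (hl : ∀ s ∈ S, s ∈ closure (Tᶜ ∩ Iio s)) (hr : ∀ s ∈ S, s ∈ closure (Tᶜ ∩ Ioi s))
    (hy : y ∈ T) (ht : t ∈ S) :
    ∃ u ∈ uIcc y t ∩ T, u ∈ closure (S ∩ uIcc y t) := by
  rcases le_total y t with hyt | hty
  · rw [uIcc_of_le hyt] at hcover ⊢
    exact exists_mem_inter_closure_inter_Icc_of_forall_mem_closure_Iio hyt hcover hl hy ht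
  · rw [uIcc_of_ge hty] at hcover ⊢
    have h := exists_mem_inter_closure_inter_Icc_of_forall_mem_closure_Iio (α := αᵒᵈ)
      (y := OrderDual.toDual y) (t := OrderDual.toDual t) hty (by rwa [Icc_toDual]) hr hy ht
    rwa [Icc_toDual] at h

lemma closure_inter_closure_subset_closure_inter {K : Set α} (hKc : IsClosed K)
    (hK : K.OrdConnected) (hcover : K ⊆ S ∪ T)
    (hl : ∀ s ∈ S, s ∈ closure (Tᶜ ∩ Iio s)) (hr : ∀ s ∈ S, s ∈ closure (Tᶜ ∩ Ioi s)) :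
    closure (S ∩ K) ∩ closure (T ∩ K) ⊆ closure (closure (S ∩ K) ∩ closure (T ∩ K) ∩ T) := by
  intro t ht
  rw [mem_closure_iff_nhds]
  intro U hU
  by_cases htT : t ∈ T
  · exact ⟨t, mem_of_mem_nhds hU, ht, htT⟩
  have htK : t ∈ K := closure_minimal inter_subset_right hKc ht.1
  have htS : t ∈ S := (hcover htK).resolve_right htT
  obtain ⟨y, hyU, hyT, hyK⟩ :=
    mem_closure_iff_nhds.1 ht.2 _ (ordConnectedComponent_mem_nhds.2 hU)
  have hyt : uIcc y t ⊆ K := hK.uIcc_subset hyK htK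
  obtain ⟨u, ⟨hu, huT⟩, huS⟩ :=
    exists_mem_inter_closure_inter_uIcc (hyt.trans hcover) hl hr hyT htS
  refine ⟨u, ?_, ⟨closure_mono (inter_subset_inter_right _ hyt) huS,
    subset_closure ⟨huT, hyt hu⟩⟩, huT⟩
  exact mem_ordConnectedComponent.1 hyU (uIcc_comm y t ▸ hu)

end Order

lemma IsClosed.not_subset_closure_inter_of_isGδ_compl {α : Type*} [TopologicalSpace α]
    [T2Space α] [LocallyCompactSpace α] {B S T : Set α} (hB : IsClosed B) (hBne : B.Nonempty)
    (hST : Disjoint S T) (hcover : B ⊆ S ∪ T) (hS : IsGδ Sᶜ) (hT : IsGδ Tᶜ)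
    (hBS : B ⊆ closure (B ∩ S)) : ¬ B ⊆ closure (B ∩ T) := by
  intro hBT
  have : LocallyCompactSpace B := hB.locallyCompactSpace
  have : Nonempty B := hBne.to_subtype
  set s : Set B := (↑) ⁻¹' S
  have hsc : sᶜ = (↑) ⁻¹' T := by
    ext ⟨x, hx⟩
    exact ⟨fun hxS => (hcover hx).resolve_left hxS, fun hxT hxS => hST.ne_of_mem hxS hxT rfl⟩
  have hs : s = (↑) ⁻¹' Tᶜ := by rw [preimage_compl, ← hsc, compl_compl]
  have hsd : Dense s := Subtype.dense_iff.2 (by rwa [Subtype.image_preimage_coe])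
  have hscd : Dense sᶜ := Subtype.dense_iff.2 (by rwa [hsc, Subtype.image_preimage_coe])
  obtain ⟨x, hxs, hxsc⟩ := (hsd.inter_of_Gδ (hs ▸ hT.preimage continuous_subtype_val)
    (hS.preimage continuous_subtype_val) hscd).nonempty
  exact hxsc hxs

lemma isGδ_compl_iUnion_of_isClosed {α ι : Type*} [TopologicalSpace α] [Countable ι]
    {f : ι → Set α} (hf : ∀ i, IsClosed (f i)) : IsGδ (⋃ i, f i)ᶜ := by
  rw [compl_iUnion]
  exact .iInter_of_isOpen fun i => (hf i).isOpen_compl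

lemma Ioo_diff_union_nonempty_of_lt {X Y : Set ℝ} (hdisj : Disjoint X Y)
    (hX : IsGδ Xᶜ) (hY : IsGδ Yᶜ)
    (haccX : ∀ x ∈ X, IsBilateralAccPt Yᶜ x) (haccY : ∀ y ∈ Y, IsBilateralAccPt Xᶜ y)
    {a c : ℝ} (ha : a ∈ X) (hc : c ∈ Y) (hac : a < c) :
    (Ioo a c \ (X ∪ Y)).Nonempty := by
  by_contra h
  rw [not_nonempty_iff_eq_empty, sdiff_eq_empty] at h
  have hK : Icc a c ⊆ X ∪ Y := by
    rw [← Ico_insert_right hac.le, ← Ioo_insert_left hac, insert_subset_iff, insert_subset_iff]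
    exact ⟨.inr hc, .inl ha, h⟩
  set B := closure (X ∩ Icc a c) ∩ closure (Y ∩ Icc a c)
  have hBne : B.Nonempty := by
    obtain ⟨u, ⟨hu, huX⟩, huY⟩ := exists_mem_inter_closure_inter_uIcc (S := Y) (T := X)
      (by rwa [uIcc_of_le hac.le, union_comm]) (fun y hy => (haccY y hy).2)
      (fun y hy => (haccY y hy).1) ha hc
    rw [uIcc_of_le hac.le] at hu huY
    exact ⟨u, subset_closure ⟨huX, hu⟩, huY⟩
  have hBX : B ⊆ closure (B ∩ X) := by
    simpa only [B, inter_comm (closure (X ∩ Icc a c))] using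
      closure_inter_closure_subset_closure_inter isClosed_Icc ordConnected_Icc
        (hK.trans (union_comm X Y).le) (fun y hy => (haccY y hy).2) (fun y hy => (haccY y hy).1)
  have hBY : B ⊆ closure (B ∩ Y) :=
    closure_inter_closure_subset_closure_inter isClosed_Icc ordConnected_Icc hK
      (fun x hx => (haccX x hx).2) (fun x hx => (haccX x hx).1)
  have hBK : B ⊆ Icc a c := fun t ht => closure_minimal inter_subset_right isClosed_Icc ht.1
  exact (isClosed_closure.inter isClosed_closure).not_subset_closure_inter_of_isGδ_compl hBne
    hdisj (hBK.trans hK) hX hY hBX hBY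

/-- If `X, Y ⊆ ℝ` are disjoint `F_σ` sets such that every point of `X`
is a bilateral accumulation point of `ℝ \ Y` and every point of `Y` is a bilateral
accumulation point of `ℝ \ X`, then for `a ∈ X`, `c ∈ Y` the open interval between
`a` and `c` meets the complement of `X ∪ Y`. -/
theorem open_segment_meets_compl_of_Fsigma
    (X Y : Set ℝ) (hdisj : Disjoint X Y)
    (hX : ∃ f : ℕ → Set ℝ, (∀ k, IsClosed (f k)) ∧ X = ⋃ k, f k)
    (hY : ∃ f : ℕ → Set ℝ, (∀ k, IsClosed (f k)) ∧ Y = ⋃ k, f k)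
    (haccX : ∀ x ∈ X, IsBilateralAccPt Yᶜ x)
    (haccY : ∀ y ∈ Y, IsBilateralAccPt Xᶜ y) :
    ∀ a ∈ X, ∀ c ∈ Y, (Set.Ioo (min a c) (max a c) \ (X ∪ Y)).Nonempty := by
  obtain ⟨f, hf, rfl⟩ := hX
  obtain ⟨g, hg, rfl⟩ := hY
  have hXc := isGδ_compl_iUnion_of_isClosed hf
  have hYc := isGδ_compl_iUnion_of_isClosed hg
  intro a ha c hc
  rcases lt_trichotomy a c with hac | rfl | hca
  · rw [min_eq_left hac.le, max_eq_right hac.le]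
    exact Ioo_diff_union_nonempty_of_lt hdisj hXc hYc haccX haccY ha hc hac
  · exact absurd hc (disjoint_left.1 hdisj ha)
  · rw [min_eq_right hca.le, max_eq_left hca.le, union_comm]
    exact Ioo_diff_union_nonempty_of_lt hdisj.symm hYc hXc haccY haccX hc ha hca

end
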